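/- Let σ(x) = 1/(1 + exp(−x)) be the sigmoid function and, for d ≥ 1, let logN(ω | μ, v) = ∑_{j=1}^d [ −(ω_j − μ_j)² / (2 v_j) − (1/2)·log(2π v_j) ] for ω, μ ∈ ℝ^d and v ∈ ℝ^d with v_j > 0. Fix real numbers g_1, …, g_n, summarizing prompts φ_1, …, φ_n ∈ ℝ^d, a function α : ℝ^d → ℝ^d whose output components are all strictly positive, local prompts ω_{t,k} ∈ ℝ^d (t = 1,…,m, k = 1,…,n_t), and assignments z_{t,k}^i ∈ {0,1} with ∑_{i=1}^n z_{t,k}^i = 1 for all (t,k). Set ψ_{t,k} = ∑_{i=1}^n z_{t,k}^i · φ_i and c_{t,i} = ∑_{k=1}^{n_t} z_{t,k}^i. Then the total log-likelihood ∑_{t=1}^m [ ∑_{k=1}^{n_t} logN(ω_{t,k} | ψ_{t,k}, α(ψ_{t,k})) + ∑_{i=1}^n ( c_{t,i} · log σ(g_i) + (1 − c_{t,i}) · log(1 − σ(g_i)) ) ] equals ∑_{i=1}^n ∑_{t=1}^m ∑_{k=1}^{n_t} z_{t,k}^i · C_{t,k}^i + m · ∑_{i=1}^n log(1 − σ(g_i)),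 where C_{t,k}^i = logN(ω_{t,k} | φ_i, α(φ_i)) + log( σ(g_i) / (1 − σ(g_i)) ); in particular, the total log-likelihood is an affine function of the assignment variables z with coefficient matrix C. -/

import Mathlib

/-- The sigmoid function `σ(x) = 1 / (1 + exp (-x))`. -/
noncomputable def sigmoid (x : ℝ) : ℝ := 1 / (1 + Real.exp (-x))

/-- Log-density at `ω` of a `d`-dimensional Gaussian with mean `μ` and diagonal
covariance with variance vector `v`. -/
noncomputable def logN (d : ℕ) (ω μ v : Fin d → ℝ) : ℝ :=
  ∑ j, (-(ω j - μ j) ^ 2 / (2 * v j) - (1 / 2) * Real.log (2 * Real.pi * v j))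

/-!
Every `z t k` is a one-hot vector, so `ψ t k` is one of the `φ i` and any function of `ψ t k`
(here the Gaussian log-density) is the `z t k`-weighted sum of its values at the `φ i`. The
Bernoulli term is affine in the counts `c t i = ∑ k, z t k i`, and exchanging the sums over `i`
and `k` gathers everything into the coefficients `C t k i`, with `log σ - log (1 - σ)` written
as the log-odds `log (σ / (1 - σ))`.
-/

open Finset

lemma sigmoid_pos (x : ℝ) : 0 < sigmoid x := by
  unfold sigmoid
  positivity

lemma sigmoid_lt_one (x : ℝ) : sigmoid x < 1 := by
  unfold sigmoid
  rw [div_lt_one (by positivity)]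
  linarith [Real.exp_pos (-x)]

lemma log_sigmoid_div_one_sub_sigmoid (x : ℝ) :
    Real.log (sigmoid x / (1 - sigmoid x)) = Real.log (sigmoid x) - Real.log (1 - sigmoid x) :=
  Real.log_div (sigmoid_pos x).ne' (sub_pos.2 (sigmoid_lt_one x)).ne'

section OneHot

variable {ι : Type*} [Fintype ι] [DecidableEq ι]

lemma exists_eq_pi_single_of_zero_or_one {z : ι → ℝ} (hbin : ∀ i, z i = 0 ∨ z i = 1)
    (hone : ∑ i, z i = 1) : ∃ i₀, z = Pi.single i₀ 1 := by
  set S := univ.filter (fun i => z i = 1)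
  have hz : ∀ i, z i = if i ∈ S then 1 else 0 := fun i => by
    rcases hbin i with h | h <;> simp [S, h]
  have hS : S.card = 1 := by
    simp only [hz, sum_boole, filter_mem_eq_inter, univ_inter] at hone
    exact_mod_cast hone
  obtain ⟨i₀, hi₀⟩ := card_eq_one.1 hS
  refine ⟨i₀, funext fun i => ?_⟩
  simp only [hz i, hi₀, Pi.single_apply, mem_singleton]

lemma apply_sum_smul_of_zero_or_one {M : Type*} [AddCommMonoid M] [Module ℝ M]
    {z : ι → ℝ} (hbin : ∀ i, z i = 0 ∨ z i = 1) (hone : ∑ i, z i = 1) (φ : ι → M)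
    (F : M → ℝ) : F (∑ i, z i • φ i) = ∑ i, z i * F (φ i) := by
  obtain ⟨i₀, rfl⟩ := exists_eq_pi_single_of_zero_or_one hbin hone
  simp [Pi.single_apply, ite_smul]

end OneHot

lemma sum_counts_bernoulli_eq {ι κ : Type*} [Fintype ι] [Fintype κ] (z L : κ → ι → ℝ)
    (a b : ι → ℝ) :
    ∑ k, ∑ i, z k i * L k i + ∑ i, ((∑ k, z k i) * a i + (1 - ∑ k, z k i) * b i) =
      ∑ i, ∑ k, z k i * (L k i + (a i - b i)) + ∑ i, b i := by
  rw [sum_comm]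
  simp only [mul_add, mul_sub, sub_mul, one_mul, sum_add_distrib, sum_sub_distrib, sum_mul]
  ring

theorem stmt_7_general (d : ℕ) (n m : ℕ) (nt : Fin m → ℕ)
    (g : Fin n → ℝ) (φ : Fin n → Fin d → ℝ)
    (α : (Fin d → ℝ) → (Fin d → ℝ))
    (ω : (t : Fin m) → Fin (nt t) → Fin d → ℝ)
    (z : (t : Fin m) → Fin (nt t) → Fin n → ℝ)
    (hbin : ∀ t k i, z t k i = 0 ∨ z t k i = 1)
    (hone : ∀ t k, ∑ i, z t k i = 1)
    (ψ : (t : Fin m) → Fin (nt t) → Fin d → ℝ)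
    (hψ : ∀ t k, ψ t k = ∑ i, z t k i • φ i)
    (c : Fin m → Fin n → ℝ)
    (hc : ∀ t i, c t i = ∑ k, z t k i)
    (C : (t : Fin m) → Fin (nt t) → Fin n → ℝ)
    (hC : ∀ t k i, C t k i = logN d (ω t k) (φ i) (α (φ i)) +
        Real.log (sigmoid (g i) / (1 - sigmoid (g i)))) :
    ∑ t, (∑ k, logN d (ω t k) (ψ t k) (α (ψ t k)) +
        ∑ i, (c t i * Real.log (sigmoid (g i)) +
          (1 - c t i) * Real.log (1 - sigmoid (g i)))) =
      ∑ i, ∑ t, ∑ k, z t k i * C t k i +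
        (m : ℝ) * ∑ i, Real.log (1 - sigmoid (g i)) := by
  have hlogN : ∀ t k, logN d (ω t k) (ψ t k) (α (ψ t k)) =
      ∑ i, z t k i * logN d (ω t k) (φ i) (α (φ i)) := fun t k => by
    rw [hψ]
    exact apply_sum_smul_of_zero_or_one (hbin t k) (hone t k) φ fun x => logN d (ω t k) x (α x)
  calc _ = ∑ t, (∑ i, ∑ k, z t k i * C t k i + ∑ i, Real.log (1 - sigmoid (g i))) := by
        refine sum_congr rfl fun t _ => ?_
        simp only [hlogN, hc, hC, log_sigmoid_div_one_sub_sigmoid]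
        exact sum_counts_bernoulli_eq (z t) _ _ _
    _ = _ := by
        rw [sum_add_distrib, sum_comm, sum_const, card_univ, Fintype.card_fin, nsmul_eq_mul]

/-- the total log-likelihood of the probabilistic prompt model,
with one-hot assignments `z`, `ψ t k = ∑ i, z t k i • φ i` and counts
`c t i = ∑ k, z t k i`, equals the affine form
`∑ i, ∑ t, ∑ k, z t k i * C t k i + m * ∑ i, log (1 - σ(gᵢ))`, where
`C t k i = logN (ω t k | φ i, α (φ i)) + log (σ(gᵢ) / (1 - σ(gᵢ)))`. -/
theorem stmt_7 (d : ℕ) (hd : 1 ≤ d) (n m : ℕ) (nt : Fin m → ℕ)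
    (g : Fin n → ℝ) (φ : Fin n → Fin d → ℝ)
    (α : (Fin d → ℝ) → (Fin d → ℝ)) (hα : ∀ x j, 0 < α x j)
    (ω : (t : Fin m) → Fin (nt t) → Fin d → ℝ)
    (z : (t : Fin m) → Fin (nt t) → Fin n → ℝ)
    (hbin : ∀ t k i, z t k i = 0 ∨ z t k i = 1)
    (hone : ∀ t k, ∑ i, z t k i = 1)
    (ψ : (t : Fin m) → Fin (nt t) → Fin d → ℝ)
    (hψ : ∀ t k, ψ t k = ∑ i, z t k i • φ i)
    (c : Fin m → Fin n → ℝ)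
    (hc : ∀ t i, c t i = ∑ k, z t k i)
    (C : (t : Fin m) → Fin (nt t) → Fin n → ℝ)
    (hC : ∀ t k i, C t k i = logN d (ω t k) (φ i) (α (φ i)) +
        Real.log (sigmoid (g i) / (1 - sigmoid (g i)))) :
    ∑ t, (∑ k, logN d (ω t k) (ψ t k) (α (ψ t k)) +
        ∑ i, (c t i * Real.log (sigmoid (g i)) +
          (1 - c t i) * Real.log (1 - sigmoid (g i)))) =
      ∑ i, ∑ t, ∑ k, z t k i * C t k i +
        (m : ℝ) * ∑ i, Real.log (1 - sigmoid (g i)) :=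
  stmt_7_general d n m nt g φ α ω z hbin hone ψ hψ c hc C hC
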